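/- For every s ∈ [0,1), each of the maps f̃₀, f̃₁, f̃₂ and the tetrahedral PET f̃_s commutes with the involution ι of the torus: for every i ∈ {0,1,2} and every p ∈ Δ̃ at which f̃_i is defined, f̃_i(ι(p)) = ι(f̃_i(p)), and consequently f̃_s(ι(p)) = ι(f̃_s(p)) at every point p where f̃_s is defined. -/

import Mathlib

open MeasureTheory
open scoped Classical

noncomputable section

/-- The lattice Λ ⊂ ℝ² generated by (2,0) and (1,−√3). -/
def TetLat : AddSubgroup (ℝ × ℝ) :=
  AddSubgroup.closure {((2 : ℝ), (0 : ℝ)), ((1 : ℝ), -Real.sqrt 3)}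

/-- The torus Δ̃ = ℝ²/Λ. -/
abbrev Torus := (ℝ × ℝ) ⧸ TetLat

/-- The quotient map ℝ² → Δ̃. -/
def tmk : ℝ × ℝ → Torus := QuotientAddGroup.mk

/-- The vertex sets of the four triangles A₀, A₁, A₂, A₃. -/
def triVerts : Fin 4 → Set (ℝ × ℝ)
  | 0 => {((-1 : ℝ), (0 : ℝ)), ((-1/2 : ℝ), Real.sqrt 3 / 2), ((0 : ℝ), (0 : ℝ))}
  | 1 => {((-1 : ℝ), (0 : ℝ)), ((-1/2 : ℝ), Real.sqrt 3 / 2), ((-3/2 : ℝ), Real.sqrt 3 / 2)}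
  | 2 => {((-1/2 : ℝ), Real.sqrt 3 / 2), ((0 : ℝ), (0 : ℝ)), ((1/2 : ℝ), Real.sqrt 3 / 2)}
  | 3 => {((-1 : ℝ), (0 : ℝ)), ((0 : ℝ), (0 : ℝ)), ((-1/2 : ℝ), -Real.sqrt 3 / 2)}

/-- The triangle A_α, as a subset of the torus Δ̃. -/
def TriA (α : Fin 4) : Set Torus := tmk '' (convexHull ℝ (triVerts α))

/-- The involution ι of Δ̃, induced by (x,y) ↦ (−x,−y). -/
def iot : Torus → Torus := fun p => -p

/-- The unit vectors ω₀, ω₁, ω₂ in the directions of the cube roots of unity. -/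
def om : Fin 3 → ℝ × ℝ
  | 0 => ((1 : ℝ), (0 : ℝ))
  | 1 => ((-1/2 : ℝ), Real.sqrt 3 / 2)
  | 2 => ((-1/2 : ℝ), -Real.sqrt 3 / 2)

/-- The index 3 − i. -/
def opp : Fin 3 → Fin 4
  | 0 => 3
  | 1 => 2
  | 2 => 1

/-- The open region where f̃ᵢ translates by +s·ωᵢ. -/
def PosReg (i : Fin 3) : Set Torus :=
  interior ((⋃ α ∈ {a : Fin 4 | a ≠ opp i}, TriA α) ∪ iot '' TriA (opp i))

/-- The open region where f̃ᵢ translates by −s·ωᵢ. -/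
def NegReg (i : Fin 3) : Set Torus :=
  interior (TriA (opp i) ∪ ⋃ α ∈ {a : Fin 4 | a ≠ opp i}, iot '' TriA α)

/-- The map f̃ᵢ (extended arbitrarily, by the −s·ωᵢ formula, off its domain of definition). -/
def fI (s : ℝ) (i : Fin 3) (p : Torus) : Torus :=
  if p ∈ PosReg i then p + tmk (s • om i) else p - tmk (s • om i)

/-- The set where f̃ᵢ is defined. -/
def fIDef (i : Fin 3) (p : Torus) : Prop := p ∈ PosReg i ∨ p ∈ NegReg i

/-- The tetrahedral PET f̃ₛ = f̃₂ ∘ f̃₁ ∘ f̃₀. -/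
def fS (s : ℝ) : Torus → Torus := fI s 2 ∘ fI s 1 ∘ fI s 0

/-- The set where f̃ₛ is defined. -/
def fSDef (s : ℝ) (p : Torus) : Prop :=
  fIDef 0 p ∧ fIDef 1 (fI s 0 p) ∧ fIDef 2 (fI s 1 (fI s 0 p))

/-!
The involution `ι` exchanges the region where `f̃ᵢ` translates by `+s ωᵢ` with the region where
it translates by `-s ωᵢ`, so `f̃ᵢ` commutes with `ι` once these two open regions are disjoint.
The first region is the interior of the image of a planar union `U` of triangles, and there is a
linear functional `φ` with `φ(Λ) ⊆ 2√3 ℤ` sending `U` into `⋃ₖ [2k√3, (2k+1)√3]`. Hence `-U`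
lands in the complementary intervals, and the lifts of a common interior point would form a
nonempty open subset of `φ⁻¹(√3 ℤ)`, a countable union of parallel lines.
-/

open Set Pointwise

section SignedTranslate

variable {G : Type*} [AddCommGroup G]

def signedTranslate (P : Set G) (c p : G) : G :=
  if p ∈ P then p + c else p - c

theorem signedTranslate_neg {P : Set G} (hP : Disjoint P (-P)) (c : G) {p : G}
    (hp : p ∈ P ∪ -P) : signedTranslate P c (-p) = -signedTranslate P c p := by
  by_cases hpP : p ∈ P
  · have hnp : -p ∉ P := fun h => hP.ne_of_mem hpP (mem_neg.mpr h) rfl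
    simp only [signedTranslate, if_pos hpP, if_neg hnp]
    abel
  · have hnp : -p ∈ P := hp.resolve_left hpP
    simp only [signedTranslate, if_pos hnp, if_neg hpP]
    abel

end SignedTranslate

section Quotient

variable {E : Type*} [AddCommGroup E] [TopologicalSpace E] [IsTopologicalAddGroup E]
  {Λ : AddSubgroup E}

theorem disjoint_interior_image_mk_neg {A B : Set E} (hAB : A ⊆ B)
    (hB : ∀ x ∈ B, ∀ l ∈ Λ, x + l ∈ B) (hBB : interior (B ∩ -B) = ∅) :
    Disjoint (interior ((QuotientAddGroup.mk : E → E ⧸ Λ) '' A))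
      (-interior ((QuotientAddGroup.mk : E → E ⧸ Λ) '' A)) := by
  set W := interior ((QuotientAddGroup.mk : E → E ⧸ Λ) '' A)
  have hmem : ∀ x : E, (x : E ⧸ Λ) ∈ W → x ∈ B := by
    intro x hx
    obtain ⟨a, ha, hax⟩ := interior_subset hx
    simpa using hB a (hAB ha) (-a + x) (QuotientAddGroup.eq.mp hax)
  have hopen : IsOpen (QuotientAddGroup.mk ⁻¹' (W ∩ -W) : Set E) :=
    (isOpen_interior.inter isOpen_interior.neg).preimage QuotientAddGroup.continuous_mk
  have hsub : (QuotientAddGroup.mk ⁻¹' (W ∩ -W) : Set E) ⊆ interior (B ∩ -B) :=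
    interior_maximal (fun x hx => ⟨hmem x hx.1, hmem (-x) hx.2⟩) hopen
  rw [hBB] at hsub
  rw [disjoint_iff_inter_eq_empty, ← subset_empty_iff]
  rintro p hp
  obtain ⟨x, rfl⟩ := QuotientAddGroup.mk_surjective p
  exact hsub hp

end Quotient

def evenBand (h : ℝ) : Set ℝ := ⋃ k : ℤ, Icc (2 * k * h) (2 * k * h + h)

theorem add_mem_evenBand {h t : ℝ} (ht : t ∈ evenBand h) {c : ℝ}
    (hc : c ∈ AddSubgroup.zmultiples (2 * h)) : t + c ∈ evenBand h := by
  obtain ⟨n, rfl⟩ := hc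
  obtain ⟨k, hk⟩ := mem_iUnion.mp ht
  refine mem_iUnion.mpr ⟨k + n, ?_⟩
  simp only [zsmul_eq_mul, Int.cast_add, mem_Icc] at hk ⊢
  constructor <;> linarith [hk.1, hk.2]

/-- Even and odd unit intervals meet only at their integer endpoints. -/
theorem evenBand_inter_neg_subset {h : ℝ} (hh : 0 < h) :
    evenBand h ∩ -evenBand h ⊆ range fun m : ℤ => m * h := by
  rintro t ⟨ht, hnt⟩
  obtain ⟨k, hk1, hk2⟩ := mem_iUnion.mp ht
  obtain ⟨j, hj1, hj2⟩ := mem_iUnion.mp hnt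
  rcases le_or_gt 0 (k + j) with hkj | hkj
  · have : (0 : ℝ) ≤ (k + j : ℤ) * h := mul_nonneg (by exact_mod_cast hkj) hh.le
    exact ⟨2 * k, by push_cast at this ⊢; linarith⟩
  · have : ((k + j : ℤ) : ℝ) * h ≤ -h := by
      nlinarith [show ((k + j : ℤ) : ℝ) ≤ -1 by exact_mod_cast (by omega : k + j ≤ -1)]
    exact ⟨2 * k + 1, by push_cast at this ⊢; linarith⟩

theorem interior_preimage_evenBand_inter_neg {E : Type*} [AddCommGroup E] [TopologicalSpace E]
    [ContinuousAdd E] [Module ℝ E] [ContinuousSMul ℝ E] {f : E →L[ℝ] ℝ} (hf : f ≠ 0) {h : ℝ}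
    (hh : 0 < h) : interior (f ⁻¹' evenBand h ∩ -(f ⁻¹' evenBand h)) = ∅ := by
  have hcount : interior (evenBand h ∩ -evenBand h) = ∅ :=
    interior_eq_empty_iff_dense_compl.mpr
      (((countable_range _).mono (evenBand_inter_neg_subset hh)).dense_compl ℝ)
  have hpre : f ⁻¹' evenBand h ∩ -(f ⁻¹' evenBand h) = f ⁻¹' (evenBand h ∩ -evenBand h) := by
    ext x; simp
  rw [hpre, ← subset_empty_iff, ← preimage_empty (f := f), ← hcount]
  exact (f.isOpenMap_of_ne_zero hf).interior_preimage_subset_preimage_interior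

theorem convexHull_subset_preimage_evenBand {E : Type*} [AddCommGroup E] [Module ℝ E]
    {f : E →ₗ[ℝ] ℝ} {V : Set E} {h : ℝ} (k : ℤ)
    (hV : ∀ v ∈ V, f v ∈ Icc (2 * k * h) (2 * k * h + h)) :
    convexHull ℝ V ⊆ f ⁻¹' evenBand h :=
  (convexHull_min hV ((convex_Icc _ _).linear_preimage f)).trans
    (preimage_mono (subset_iUnion (fun k : ℤ => Icc (2 * k * h) (2 * k * h + h)) k))

def planarRegion (i : Fin 3) : Set (ℝ × ℝ) :=
  (⋃ α ∈ {a : Fin 4 | a ≠ opp i}, convexHull ℝ (triVerts α)) ∪ -convexHull ℝ (triVerts (opp i))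

theorem image_iot (S : Set Torus) : iot '' S = -S := image_neg_eq_neg

theorem image_tmk_neg (X : Set (ℝ × ℝ)) : tmk '' (-X) = -(tmk '' X) :=
  image_neg (QuotientAddGroup.mk' TetLat) X

theorem posReg_eq (i : Fin 3) : PosReg i = interior (tmk '' planarRegion i) := by
  rw [PosReg, planarRegion, image_union, image_iot, image_tmk_neg, image_iUnion₂]
  rfl

theorem negReg_eq (i : Fin 3) : NegReg i = -PosReg i := by
  rw [NegReg, PosReg, ← neg_preimage, ← Homeomorph.coe_neg, Homeomorph.preimage_interior]
  congr 1
  simp only [Homeomorph.coe_neg, neg_preimage, image_iot, union_neg, iUnion_neg, neg_neg]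
  exact union_comm _ _

theorem fI_eq_signedTranslate (s : ℝ) (i : Fin 3) :
    fI s i = signedTranslate (PosReg i) (tmk (s • om i)) :=
  rfl

def planeFunctional (a b : ℝ) : ℝ × ℝ →L[ℝ] ℝ :=
  a • ContinuousLinearMap.fst ℝ ℝ ℝ + b • ContinuousLinearMap.snd ℝ ℝ ℝ

@[simp]
theorem planeFunctional_apply (a b : ℝ) (x : ℝ × ℝ) : planeFunctional a b x = a * x.1 + b * x.2 :=
  rfl

/-- `bandFunctional i` is constant along `ωᵢ`; its level sets at `√3 ℤ` are the lines of the
triangular grid parallel to `ωᵢ`. -/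
def bandFunctional : Fin 3 → ℝ × ℝ →L[ℝ] ℝ
  | 0 => planeFunctional 0 2
  | 1 => planeFunctional (-√3) (-1)
  | 2 => planeFunctional (-√3) 1

theorem bandFunctional_ne_zero (i : Fin 3) : bandFunctional i ≠ 0 := by
  intro h
  have := congrArg (fun f : ℝ × ℝ →L[ℝ] ℝ => f (0, 1)) h
  fin_cases i <;> simp [bandFunctional] at this

theorem bandFunctional_mem_zmultiples (i : Fin 3) {l : ℝ × ℝ} (hl : l ∈ TetLat) :
    bandFunctional i l ∈ AddSubgroup.zmultiples (2 * √3) := by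
  suffices TetLat ≤ (AddSubgroup.zmultiples (2 * √3)).comap (bandFunctional i : ℝ × ℝ →+ ℝ) from
    this hl
  rw [TetLat, AddSubgroup.closure_le, insert_subset_iff, singleton_subset_iff]
  simp only [SetLike.mem_coe, AddSubgroup.mem_comap, AddSubgroup.mem_zmultiples_iff]
  fin_cases i
  · exact ⟨⟨0, by simp [bandFunctional]⟩, ⟨-1, by simp [bandFunctional]⟩⟩
  · exact ⟨⟨-1, by simp [bandFunctional]; ring⟩, ⟨0, by simp [bandFunctional]⟩⟩
  · exact ⟨⟨-1, by simp [bandFunctional]; ring⟩, ⟨-1, by simp [bandFunctional]; ring⟩⟩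

theorem planarRegion_subset (i : Fin 3) :
    planarRegion i ⊆ bandFunctional i ⁻¹' evenBand √3 := by
  have h3 : 0 ≤ √3 := Real.sqrt_nonneg 3
  rintro x (hx | hx)
  · obtain ⟨α, hα, hx⟩ := mem_iUnion₂.mp hx
    refine convexHull_subset_preimage_evenBand (f := (bandFunctional i : ℝ × ℝ →ₗ[ℝ] ℝ)) 0 ?_ hx
    fin_cases i <;> fin_cases α <;> simp [triVerts, bandFunctional, opp] at hα ⊢ <;>
      and_intros <;> linarith
  · rw [← convexHull_neg] at hx
    refine convexHull_subset_preimage_evenBand (f := (bandFunctional i : ℝ × ℝ →ₗ[ℝ] ℝ))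
      (if i = 2 then -1 else 0) ?_ hx
    fin_cases i <;> simp [triVerts, bandFunctional, opp] <;> and_intros <;> linarith

theorem disjoint_posReg_neg (i : Fin 3) : Disjoint (PosReg i) (-PosReg i) := by
  rw [posReg_eq]
  refine disjoint_interior_image_mk_neg (planarRegion_subset i) (fun x hx l hl => ?_)
    (interior_preimage_evenBand_inter_neg (bandFunctional_ne_zero i) (by positivity))
  rw [mem_preimage, map_add]
  exact add_mem_evenBand hx (bandFunctional_mem_zmultiples i hl)

theorem stmt_13_general (s : ℝ) :
    (∀ i : Fin 3, ∀ p : Torus, fIDef i p → fI s i (iot p) = iot (fI s i p)) ∧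
    (∀ p : Torus, fSDef s p → fS s (iot p) = iot (fS s p)) := by
  have hfI : ∀ i : Fin 3, ∀ p : Torus, fIDef i p → fI s i (iot p) = iot (fI s i p) :=
    fun i p hp => by
      rw [fI_eq_signedTranslate]
      exact signedTranslate_neg (disjoint_posReg_neg i) _ (by rwa [fIDef, negReg_eq] at hp)
  refine ⟨hfI, fun p ⟨h0, h1, h2⟩ => ?_⟩
  simp only [fS, Function.comp_apply, hfI 0 p h0, hfI 1 _ h1, hfI 2 _ h2]

/-- For every s ∈ [0,1), each of the maps f̃₀, f̃₁, f̃₂ commutes with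
the involution ι : p ↦ −p of the torus wherever defined, and consequently so does the
tetrahedral PET f̃ₛ. -/
theorem stmt_13 (s : ℝ) (hs : s ∈ Set.Ico (0 : ℝ) 1) :
    (∀ i : Fin 3, ∀ p : Torus, fIDef i p → fI s i (iot p) = iot (fI s i p)) ∧
    (∀ p : Torus, fSDef s p → fS s (iot p) = iot (fS s p)) :=
  stmt_13_general s

end
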